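/- Let ε, δ, L be nonnegative real numbers with ε + 3·L·δ < 1/2, and let g : ℝ³ → ℝ be L-Lipschitz with respect to the ℓ¹ norm on ℝ³ (i.e. |g(x) − g(y)| ≤ L·(|x₁ − y₁| + |x₂ − y₂| + |x₃ − y₃|)) and satisfy |g(ι(a), ι(b), ι(c)) − ι(ρ(a,b,c))| ≤ ε for all Booleans a, b, c. Then for every real-valued configuration u : ℤ → ℝ and every Boolean configuration c : ℤ → Bool such that |u(i) − ι(c(i))| ≤ δ for all i ∈ ℤ, thresholding the continuous update of u recovers the exact Rule 110 update of c: for every i ∈ ℤ, θ(g(u(i−1), u(i), u(i+1))) = ρ(c(i−1), c(i), c(i+1)). That is, symbolic dynamics can be recovered from the continuous field even in the presence of bounded perturbations of the cell states. -/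

import Mathlib

/-- Rule 110 local rule. -/
def rho (a b c : Bool) : Bool := (b || c) && !(a && b && c)

/-- Embedding of Booleans into ℝ. -/
noncomputable def iotaB (b : Bool) : ℝ := if b then 1 else 0

/-- Thresholding at 1/2. -/
noncomputable def theta (x : ℝ) : Bool := decide ((1 : ℝ) / 2 ≤ x)

/-!
The controller is within `ε` of the truth table at the Boolean corner `ι ∘ c`, and by the ℓ¹
Lipschitz bound within `3Lδ` of its value there at the perturbed input. So the continuous update
lies strictly within `1/2` of `ι (ρ …) ∈ {0, 1}`, and thresholding at `1/2` returns `ρ …`.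
-/

theorem theta_eq_of_abs_sub_iotaB_lt {x : ℝ} {b : Bool} (h : |x - iotaB b| < 1 / 2) :
    theta x = b := by
  rw [abs_lt] at h
  cases b <;> simp only [iotaB, theta, Bool.false_eq_true, if_true, if_false] at h ⊢ <;>
    simp only [decide_eq_true_eq, decide_eq_false_iff_not, not_le] <;> linarith [h.1, h.2]

theorem abs_sub_le_three_mul_of_l1_lipschitz {L δ : ℝ} {g : ℝ → ℝ → ℝ → ℝ} (hL : 0 ≤ L)
    (hLip : ∀ x₁ x₂ x₃ y₁ y₂ y₃ : ℝ,
      |g x₁ x₂ x₃ - g y₁ y₂ y₃| ≤ L * (|x₁ - y₁| + |x₂ - y₂| + |x₃ - y₃|))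
    {x₁ x₂ x₃ y₁ y₂ y₃ : ℝ} (h₁ : |x₁ - y₁| ≤ δ) (h₂ : |x₂ - y₂| ≤ δ) (h₃ : |x₃ - y₃| ≤ δ) :
    |g x₁ x₂ x₃ - g y₁ y₂ y₃| ≤ 3 * L * δ :=
  calc |g x₁ x₂ x₃ - g y₁ y₂ y₃| ≤ L * (|x₁ - y₁| + |x₂ - y₂| + |x₃ - y₃|) := hLip ..
    _ ≤ L * (3 * δ) := by gcongr; linarith
    _ = 3 * L * δ := by ring

theorem nftm_rule110_robust_recovery_general
    (ε δ L : ℝ) (hL : 0 ≤ L)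
    (hsum : ε + 3 * L * δ < 1 / 2)
    (g : ℝ → ℝ → ℝ → ℝ)
    (hLip : ∀ x₁ x₂ x₃ y₁ y₂ y₃ : ℝ,
      |g x₁ x₂ x₃ - g y₁ y₂ y₃| ≤ L * (|x₁ - y₁| + |x₂ - y₂| + |x₃ - y₃|))
    (hg : ∀ a b c : Bool, |g (iotaB a) (iotaB b) (iotaB c) - iotaB (rho a b c)| ≤ ε)
    (u : ℤ → ℝ) (c : ℤ → Bool) (hu : ∀ i : ℤ, |u i - iotaB (c i)| ≤ δ) :
    ∀ i : ℤ, theta (g (u (i - 1)) (u i) (u (i + 1))) = rho (c (i - 1)) (c i) (c (i + 1)) := by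
  intro i
  have hperturb := abs_sub_le_three_mul_of_l1_lipschitz hL hLip (hu (i - 1)) (hu i) (hu (i + 1))
  have hcorner := hg (c (i - 1)) (c i) (c (i + 1))
  apply theta_eq_of_abs_sub_iotaB_lt
  calc _ ≤ _ := abs_sub_le _ (g (iotaB (c (i - 1))) (iotaB (c i)) (iotaB (c (i + 1)))) _
    _ < 1 / 2 := by linarith

/-- Symbolic Rule 110 dynamics can be recovered from the continuous field even in the
presence of bounded perturbations of the cell states, provided the controller is
`L`-Lipschitz (ℓ¹) and approximates the truth table with error `ε`, with `ε + 3Lδ < 1/2`. -/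
theorem nftm_rule110_robust_recovery
    (ε δ L : ℝ) (hε : 0 ≤ ε) (hδ : 0 ≤ δ) (hL : 0 ≤ L)
    (hsum : ε + 3 * L * δ < 1 / 2)
    (g : ℝ → ℝ → ℝ → ℝ)
    (hLip : ∀ x₁ x₂ x₃ y₁ y₂ y₃ : ℝ,
      |g x₁ x₂ x₃ - g y₁ y₂ y₃| ≤ L * (|x₁ - y₁| + |x₂ - y₂| + |x₃ - y₃|))
    (hg : ∀ a b c : Bool, |g (iotaB a) (iotaB b) (iotaB c) - iotaB (rho a b c)| ≤ ε)
    (u : ℤ → ℝ) (c : ℤ → Bool) (hu : ∀ i : ℤ, |u i - iotaB (c i)| ≤ δ) :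
    ∀ i : ℤ, theta (g (u (i - 1)) (u i) (u (i + 1))) = rho (c (i - 1)) (c i) (c (i + 1)) :=
  nftm_rule110_robust_recovery_general ε δ L hL hsum g hLip hg u c hu
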